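/- arXiv:1705.00133 — 2 statements merged into one kernel-verified Lean document; each statement's English description precedes it below -/
import Mathlib

section
/- (Normalizing witnesses.) If μ₁ ∈ SubDist(A) and μ₂ ∈ SubDist(B) admit an (ε,δ)-approximate ⋆-lifting for R, then there exist witnesses η_L, η_R for this lifting such that for all (a,b) ∈ A × B (excluding ⋆), η_R(a,b) ≤ η_L(a,b) ≤ e^ε · η_R(a,b). -/
/-!
Cut the witnesses down on `A × B` to `ηL' = min ηL (e^ε ηR)` and `ηR' = min ηR ηL`, and put the
residual row (column) mass at `⋆`. Marginals and supports are preserved, total masses do not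
change, and `ηR' ≤ ηL' ≤ e^ε ηR'` because `1 ≤ e^ε`. The divergence is the total positive part
of `η̄L - e^ε η̄R`: after the cut it vanishes on `A × B`, while the mass `(ηL - e^ε ηR)⁺`
removed from row `a` reappears at `(a, ⋆)`, where `η̄R` is zero. So the divergence is unchanged.
-/

open scoped ENNReal

noncomputable section

def mass {A : Type*} (μ : A → ℝ≥0∞) (X : Set A) : ℝ≥0∞ := ∑' x : X, μ x

def SubDist {A : Type*} (μ : A → ℝ≥0∞) : Prop := mass μ Set.univ ≤ 1

def dpDiv {B : Type*} (ε : ℝ) (μ ν : B → ℝ≥0∞) : ℝ≥0∞ :=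
  ⨆ E : Set B, (mass μ E - ENNReal.ofReal (Real.exp ε) * mass ν E)

def relImage {A B : Type*} (R : A → B → Prop) (X : Set A) : Set B :=
  {b | ∃ a ∈ X, R a b}

def extL {A B : Type*} (η : A × Option B → ℝ≥0∞) : Option A × Option B → ℝ≥0∞ :=
  fun p => p.1.elim 0 (fun a => η (a, p.2))

def extR {A B : Type*} (η : Option A × B → ℝ≥0∞) : Option A × Option B → ℝ≥0∞ :=
  fun p => p.2.elim 0 (fun b => η (p.1, b))

/-- The conditions for a pair `(ηL, ηR)` to witness an `(ε,δ)`-approximate ⋆-lifting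
of `μ₁` and `μ₂` for the relation `R`.  Here `⋆` is represented by `none`. -/
def IsStarWitness {A B : Type*} (ε δ : ℝ) (μ₁ : A → ℝ≥0∞) (μ₂ : B → ℝ≥0∞)
    (R : A → B → Prop) (ηL : A × Option B → ℝ≥0∞) (ηR : Option A × B → ℝ≥0∞) : Prop :=
  SubDist ηL ∧ SubDist ηR ∧
  (∀ a, (∑' b : Option B, ηL (a, b)) = μ₁ a) ∧
  (∀ b, (∑' a : Option A, ηR (a, b)) = μ₂ b) ∧
  (∀ a b, ηL (a, some b) ≠ 0 → R a b) ∧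
  (∀ a b, ηR (some a, b) ≠ 0 → R a b) ∧
  dpDiv ε (extL ηL) (extR ηR) ≤ ENNReal.ofReal δ

/-- Existence of an `(ε,δ)`-approximate ⋆-lifting. -/
def StarLift {A B : Type*} (ε δ : ℝ) (μ₁ : A → ℝ≥0∞) (μ₂ : B → ℝ≥0∞)
    (R : A → B → Prop) : Prop :=
  ∃ ηL ηR, IsStarWitness ε δ μ₁ μ₂ R ηL ηR

theorem ENNReal.tsum_option {X : Type*} (f : Option X → ℝ≥0∞) :
    ∑' o, f o = f none + ∑' x, f (some x) := by
  rw [← (Equiv.optionEquivSumPUnit.{0} X).symm.tsum_eq,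
    ENNReal.summable.tsum_sum ENNReal.summable, add_comm]
  simp [Equiv.optionEquivSumPUnit]

theorem ENNReal.tsum_tsub {X : Type*} {f g : X → ℝ≥0∞} (hg : ∑' x, g x ≠ ∞) (hgf : g ≤ f) :
    ∑' x, (f x - g x) = ∑' x, f x - ∑' x, g x :=
  ENNReal.eq_sub_of_add_eq hg <| by
    rw [← ENNReal.tsum_add]
    exact tsum_congr fun x => tsub_add_cancel_of_le (hgf x)

theorem ENNReal.add_tsum_tsub_tsum_min {X : Type*} (y : ℝ≥0∞) {f : X → ℝ≥0∞}
    (hf : ∑' x, f x ≠ ∞) (g : X → ℝ≥0∞) :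
    y + ∑' x, f x - ∑' x, min (f x) (g x) = y + ∑' x, (f x - g x) := by
  have hle : ∑' x, min (f x) (g x) ≤ ∑' x, f x :=
    ENNReal.tsum_le_tsum fun x => min_le_left _ _
  have hmin : ∑' x, min (f x) (g x) ≠ ∞ := ne_top_of_le_ne_top hf hle
  rw [(ENNReal.cancel_of_ne hmin).add_tsub_assoc_of_le hle,
    ← ENNReal.tsum_tsub hmin fun x => min_le_left _ _]
  simp only [tsub_min]

theorem one_le_ofReal_exp {ε : ℝ} (hε : 0 ≤ ε) : 1 ≤ ENNReal.ofReal (Real.exp ε) :=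
  ENNReal.one_le_ofReal.2 (Real.one_le_exp hε)

section Mass

variable {X Y : Type*}

theorem mass_univ (μ : X → ℝ≥0∞) : mass μ Set.univ = ∑' x, μ x := tsum_univ μ

theorem mass_univ_prod (η : X × Y → ℝ≥0∞) :
    mass η Set.univ = ∑' x, ∑' y, η (x, y) := by
  rw [mass_univ, ENNReal.tsum_prod']

theorem mass_univ_prod_comm (η : X × Y → ℝ≥0∞) :
    mass η Set.univ = ∑' y, ∑' x, η (x, y) := by
  rw [mass_univ_prod, ENNReal.tsum_comm]

theorem mass_le_mass_univ (μ : X → ℝ≥0∞) (E : Set X) : mass μ E ≤ mass μ Set.univ :=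
  (ENNReal.tsum_comp_le_tsum_of_injective Subtype.val_injective μ).trans_eq (mass_univ μ).symm

theorem SubDist.tsum_ne_top {μ : X → ℝ≥0∞} (hμ : SubDist μ) : ∑' x, μ x ≠ ∞ :=
  ne_top_of_le_ne_top ENNReal.one_ne_top ((mass_univ μ).symm.trans_le hμ)

end Mass

section Divergence

variable {C : Type*} (ε : ℝ) (μ ν : C → ℝ≥0∞)

theorem dpDiv_le_tsum : dpDiv ε μ ν ≤ ∑' p, (μ p - ENNReal.ofReal (Real.exp ε) * ν p) := by
  set K := ENNReal.ofReal (Real.exp ε)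
  refine iSup_le fun E => tsub_le_iff_right.2 ?_
  calc mass μ E ≤ ∑' p : E, ((μ p - K * ν p) + K * ν p) :=
        ENNReal.tsum_le_tsum fun p => le_tsub_add
    _ = mass (fun p => μ p - K * ν p) E + K * mass ν E := by
        rw [ENNReal.tsum_add, ENNReal.tsum_mul_left, mass, mass]
    _ ≤ ∑' p, (μ p - K * ν p) + K * mass ν E := by
        grw [mass_le_mass_univ, mass_univ]

theorem dpDiv_eq_tsum (hν : ∑' p, ν p ≠ ∞) :
    dpDiv ε μ ν = ∑' p, (μ p - ENNReal.ofReal (Real.exp ε) * ν p) := by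
  set K := ENNReal.ofReal (Real.exp ε)
  refine (dpDiv_le_tsum ε μ ν).antisymm ?_
  set E : Set C := {p | K * ν p < μ p}
  have hsupp : Function.support (fun p => μ p - K * ν p) ⊆ E := fun p hp =>
    tsub_pos_iff_lt.1 (pos_iff_ne_zero.2 hp)
  have hνE : ∑' p : E, K * ν p ≠ ∞ := by
    rw [ENNReal.tsum_mul_left]
    exact ENNReal.mul_ne_top ENNReal.ofReal_ne_top (ne_top_of_le_ne_top hν
      (ENNReal.tsum_comp_le_tsum_of_injective Subtype.val_injective ν))
  calc ∑' p, (μ p - K * ν p) = ∑' p : E, (μ p - K * ν p) :=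
        (tsum_subtype_eq_of_support_subset hsupp).symm
    _ = mass μ E - K * mass ν E := by
        rw [ENNReal.tsum_tsub hνE fun p => p.2.le, ENNReal.tsum_mul_left, mass, mass]
    _ ≤ dpDiv ε μ ν := le_iSup (fun E => mass μ E - K * mass ν E) E

end Divergence

section Extension

variable {A B : Type*}

theorem tsum_extR (η : Option A × B → ℝ≥0∞) : ∑' p, extR η p = ∑' q, η q := by
  rw [ENNReal.tsum_prod', ENNReal.tsum_prod']
  refine tsum_congr fun a => ?_
  rw [ENNReal.tsum_option]
  simp [extR]

theorem tsum_extL_tsub_extR (ηL : A × Option B → ℝ≥0∞) (ηR : Option A × B → ℝ≥0∞)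
    (c : ℝ≥0∞) :
    ∑' p, (extL ηL p - c * extR ηR p) =
      ∑' a, (ηL (a, none) + ∑' b, (ηL (a, some b) - c * ηR (some a, b))) := by
  rw [ENNReal.tsum_prod', ENNReal.tsum_option]
  simp [extL, extR, ENNReal.tsum_option]

end Extension

def completeAtStar {X : Type*} (m : ℝ≥0∞) (f : X → ℝ≥0∞) : Option X → ℝ≥0∞ :=
  fun o => o.elim (m - ∑' x, f x) f

theorem tsum_completeAtStar {X : Type*} {m : ℝ≥0∞} {f : X → ℝ≥0∞} (h : ∑' x, f x ≤ m) :
    ∑' o, completeAtStar m f o = m := by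
  rw [ENNReal.tsum_option]
  exact tsub_add_cancel_of_le h

section Normalization

variable {A B : Type*} (c : ℝ≥0∞) (μ₁ : A → ℝ≥0∞) (μ₂ : B → ℝ≥0∞)
  (ηL : A × Option B → ℝ≥0∞) (ηR : Option A × B → ℝ≥0∞)

def normalizedL : A × Option B → ℝ≥0∞ := fun p =>
  completeAtStar (μ₁ p.1) (fun b => min (ηL (p.1, some b)) (c * ηR (some p.1, b))) p.2

/-- Cutting `ηR` down to `min ηR ηL` rather than `min ηR (c ηL)` is what gives `ηR' ≤ ηL'`. -/
def normalizedR : Option A × B → ℝ≥0∞ := fun p =>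
  completeAtStar (μ₂ p.2) (fun a => min (ηR (some a, p.2)) (ηL (a, some p.2))) p.1

variable {c μ₁ μ₂ ηL ηR}

theorem normalizedR_le_normalizedL (hc : 1 ≤ c) (a : A) (b : B) :
    normalizedR μ₂ ηL ηR (some a, b) ≤ normalizedL c μ₁ ηL ηR (a, some b) :=
  le_min (min_le_right _ _) ((min_le_left _ _).trans (le_mul_of_one_le_left' hc))

theorem normalizedL_le_mul_normalizedR (hc : 1 ≤ c) (a : A) (b : B) :
    normalizedL c μ₁ ηL ηR (a, some b) ≤ c * normalizedR μ₂ ηL ηR (some a, b) := by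
  change min _ _ ≤ c * min _ _
  rw [mul_min_of_nonneg _ _ zero_le]
  exact le_min (min_le_right _ _) ((min_le_left _ _).trans (le_mul_of_one_le_left' hc))

theorem tsum_normalizedL (hμ₁ : ∀ a, ∑' ob, ηL (a, ob) = μ₁ a) (a : A) :
    ∑' ob, normalizedL c μ₁ ηL ηR (a, ob) = μ₁ a := by
  refine tsum_completeAtStar (m := μ₁ a) (f := fun b => min (ηL (a, some b)) (c * ηR (some a, b)))
    ((ENNReal.tsum_le_tsum fun b => min_le_left _ _).trans ?_)
  rw [← hμ₁ a, ENNReal.tsum_option]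
  exact le_add_self

theorem tsum_normalizedR (hμ₂ : ∀ b, ∑' oa, ηR (oa, b) = μ₂ b) (b : B) :
    ∑' oa, normalizedR μ₂ ηL ηR (oa, b) = μ₂ b := by
  refine tsum_completeAtStar (m := μ₂ b) (f := fun a => min (ηR (some a, b)) (ηL (a, some b)))
    ((ENNReal.tsum_le_tsum fun a => min_le_left _ _).trans ?_)
  rw [← hμ₂ b, ENNReal.tsum_option]
  exact le_add_self

theorem tsum_extL_normalized_tsub (hc : 1 ≤ c) (hμ₁ : ∀ a, ∑' ob, ηL (a, ob) = μ₁ a)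
    (hfin : ∀ a, ∑' b, ηL (a, some b) ≠ ∞) :
    ∑' p, (extL (normalizedL c μ₁ ηL ηR) p - c * extR (normalizedR μ₂ ηL ηR) p) =
      ∑' p, (extL ηL p - c * extR ηR p) := by
  rw [tsum_extL_tsub_extR, tsum_extL_tsub_extR]
  refine tsum_congr fun a => ?_
  have hzero (b : B) :
      normalizedL c μ₁ ηL ηR (a, some b) - c * normalizedR μ₂ ηL ηR (some a, b) = 0 :=
    tsub_eq_zero_of_le (normalizedL_le_mul_normalizedR hc a b)
  simp only [hzero, tsum_zero, add_zero]
  change μ₁ a - ∑' b, min (ηL (a, some b)) (c * ηR (some a, b)) = _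
  rw [← hμ₁ a, ENNReal.tsum_option, ENNReal.add_tsum_tsub_tsum_min _ (hfin a)]

theorem IsStarWitness.normalized {ε δ : ℝ} {R : A → B → Prop}
    (hw : IsStarWitness ε δ μ₁ μ₂ R ηL ηR) (hε : 0 ≤ ε) :
    IsStarWitness ε δ μ₁ μ₂ R
      (normalizedL (ENNReal.ofReal (Real.exp ε)) μ₁ ηL ηR) (normalizedR μ₂ ηL ηR) := by
  obtain ⟨hL, hR, hμ₁, hμ₂, hsuppL, hsuppR, hdiv⟩ := hw
  have hK := one_le_ofReal_exp hε
  have hfin (a : A) : ∑' b, ηL (a, some b) ≠ ∞ :=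
    ne_top_of_le_ne_top hL.tsum_ne_top <| ENNReal.tsum_comp_le_tsum_of_injective
      ((Prod.mk_right_injective a).comp (Option.some_injective B)) ηL
  refine ⟨?_, ?_, tsum_normalizedL hμ₁, tsum_normalizedR hμ₂,
    fun a b h => hsuppL a b ?_, fun a b h => hsuppR a b ?_, ?_⟩
  · rw [SubDist, mass_univ_prod, tsum_congr (tsum_normalizedL hμ₁), ← tsum_congr hμ₁,
      ← mass_univ_prod]
    exact hL
  · rw [SubDist, mass_univ_prod_comm, tsum_congr (tsum_normalizedR hμ₂), ← tsum_congr hμ₂,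
      ← mass_univ_prod_comm]
    exact hR
  · exact ((pos_iff_ne_zero.2 h).trans_le (min_le_left _ _)).ne'
  · exact ((pos_iff_ne_zero.2 h).trans_le (min_le_left _ _)).ne'
  · calc _ ≤ _ := dpDiv_le_tsum ε _ _
      _ = _ := tsum_extL_normalized_tsub hK hμ₁ hfin
      _ = dpDiv ε (extL ηL) (extR ηR) :=
        (dpDiv_eq_tsum ε _ _ ((tsum_extR ηR).trans_ne hR.tsum_ne_top)).symm
      _ ≤ _ := hdiv

end Normalization

theorem starLift_normalized_witnesses_general {A B : Type*}
    (μ₁ : A → ℝ≥0∞) (μ₂ : B → ℝ≥0∞)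
    (R : A → B → Prop) (ε δ : ℝ) (hε : 0 ≤ ε)
    (h : StarLift ε δ μ₁ μ₂ R) :
    ∃ ηL ηR, IsStarWitness ε δ μ₁ μ₂ R ηL ηR ∧
      ∀ a b, ηR (some a, b) ≤ ηL (a, some b) ∧
        ηL (a, some b) ≤ ENNReal.ofReal (Real.exp ε) * ηR (some a, b) := by
  obtain ⟨ηL, ηR, hw⟩ := h
  have hK := one_le_ofReal_exp hε
  exact ⟨_, _, hw.normalized hε, fun a b =>
    ⟨normalizedR_le_normalizedL hK a b, normalizedL_le_mul_normalizedR hK a b⟩⟩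

theorem starLift_normalized_witnesses {A B : Type*}
    (μ₁ : A → ℝ≥0∞) (μ₂ : B → ℝ≥0∞) (h₁ : SubDist μ₁) (h₂ : SubDist μ₂)
    (R : A → B → Prop) (ε δ : ℝ) (hε : 0 ≤ ε) (hδ : 0 ≤ δ)
    (h : StarLift ε δ μ₁ μ₂ R) :
    ∃ ηL ηR, IsStarWitness ε δ μ₁ μ₂ R ηL ηR ∧
      ∀ a b, ηR (some a, b) ≤ ηL (a, some b) ∧
        ηL (a, some b) ≤ ENNReal.ofReal (Real.exp ε) * ηR (some a, b) :=
  starLift_normalized_witnesses_general μ₁ μ₂ R ε δ hε h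
end
end

section
/- (Sequential composition of ⋆-liftings.) Let μ₁ ∈ SubDist(A₁), μ₂ ∈ SubDist(A₂), η₁ : A₁ → SubDist(B₁), η₂ : A₂ → SubDist(B₂), R ⊆ A₁ × A₂, S ⊆ B₁ × B₂. Suppose for all X ⊆ A₁, μ₁[X] ≤ e^ε μ₂[R(X)] + δ, and for all (a₁,a₂) ∈ R and all Y ⊆ B₁, η₁(a₁)[Y] ≤ e^{ε'} η₂(a₂)[S(Y)] + δ'. Then for all Y ⊆ B₁, (bind μ₁ η₁)[Y] ≤ e^{ε+ε'} (bind μ₂ η₂)[S(Y)] + δ + δ'. -/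
/-!
Put `f a₁ := η₁(a₁)[Y] - δ'` and `g a₂ := min (e^{ε'} η₂(a₂)[S(Y)]) 1`. Both are `[0, 1]`-valued,
`bind μ₁ η₁ [Y] ≤ ∑ μ₁ f + δ'`, and the hypothesis on `η₁, η₂` says exactly that `f a₁ ≤ g a₂`
whenever `R a₁ a₂`. For such a pair, `R` maps every superlevel set `{f > t}` into `{g > t}`, so
integrating the set bound `μ₁[X] ≤ e^ε μ₂[R(X)] + δ` over `t ∈ (0, 1]` (layer cake) gives
`∑ μ₁ f ≤ e^ε ∑ μ₂ g + δ`, and `∑ μ₂ g ≤ e^{ε'} bind μ₂ η₂ [S(Y)]`.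
-/

open scoped ENNReal

noncomputable section

/-- Monadic bind of a sub-distribution with a kernel. -/
def dbind {A B : Type*} (μ : A → ℝ≥0∞) (η : A → B → ℝ≥0∞) : B → ℝ≥0∞ :=
  fun b => ∑' a : A, μ a * η a b

open MeasureTheory Set

section Mass

variable {A : Type*}

lemma mass_eq_tsum_indicator (μ : A → ℝ≥0∞) (X : Set A) :
    mass μ X = ∑' a, X.indicator μ a :=
  tsum_subtype X μ

lemma mass_univ_s15 (μ : A → ℝ≥0∞) : mass μ univ = ∑' a, μ a :=
  tsum_univ μ

lemma mass_mono (μ : A → ℝ≥0∞) {X Y : Set A} (h : X ⊆ Y) : mass μ X ≤ mass μ Y :=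
  ENNReal.tsum_mono_subtype μ h

lemma SubDist.tsum_le_one {μ : A → ℝ≥0∞} (h : SubDist μ) : ∑' a, μ a ≤ 1 :=
  mass_univ_s15 μ ▸ h

lemma SubDist.mass_le_one {μ : A → ℝ≥0∞} (h : SubDist μ) (X : Set A) : mass μ X ≤ 1 :=
  (mass_mono μ (subset_univ X)).trans h

lemma mass_dbind {B : Type*} (μ : A → ℝ≥0∞) (η : A → B → ℝ≥0∞) (Y : Set B) :
    mass (dbind μ η) Y = ∑' a, μ a * mass (η a) Y := by
  simp only [mass, dbind]
  rw [ENNReal.tsum_comm]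
  exact tsum_congr fun a => ENNReal.tsum_mul_left

lemma tsum_mul_eq_lintegral_mass_lt (μ φ : A → ℝ≥0∞) (hφ : ∀ a, φ a ≤ 1) :
    ∑' a, μ a * φ a = ∫⁻ t in Ioc (0 : ℝ) 1, mass μ {a | ENNReal.ofReal t < φ a} := by
  let _ : MeasurableSpace A := ⊤
  have hφ_ne_top : ∀ a, φ a ≠ ⊤ := fun a => ne_top_of_le_ne_top ENNReal.one_ne_top (hφ a)
  set ν : Measure A := Measure.count.withDensity μ
  have hν : ∀ X : Set A, ν X = mass μ X := fun X => by
    rw [withDensity_apply _ (MeasurableSpace.measurableSet_top),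
      ← lintegral_indicator MeasurableSpace.measurableSet_top, lintegral_count,
      mass_eq_tsum_indicator]
  have h_sum : ∑' a, μ a * φ a = ∫⁻ a, ENNReal.ofReal (φ a).toReal ∂ν := by
    simp only [ENNReal.ofReal_toReal (hφ_ne_top _), ν,
      lintegral_withDensity_eq_lintegral_mul _ measurable_from_top measurable_from_top,
      lintegral_count, Pi.mul_apply]
  have h_level : ∀ t ∈ Ioi (0 : ℝ),
      ν {a | t < (φ a).toReal} = mass μ {a | ENNReal.ofReal t < φ a} := fun t ht => by
    simp only [hν, ENNReal.ofReal_lt_iff_lt_toReal (le_of_lt ht) (hφ_ne_top _)]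
  have h_high : ∀ t ∈ Ioi (1 : ℝ), mass μ {a | ENNReal.ofReal t < φ a} = 0 := fun t ht => by
    have : {a | ENNReal.ofReal t < φ a} = ∅ :=
      eq_empty_of_forall_notMem fun a h => (h.trans_le (hφ a)).not_ge
        (ENNReal.one_lt_ofReal.mpr ht).le
    simp [this, mass]
  rw [h_sum, lintegral_eq_lintegral_meas_lt ν (ae_of_all _ fun _ => ENNReal.toReal_nonneg)
      measurable_from_top.aemeasurable, setLIntegral_congr_fun measurableSet_Ioi h_level,
    ← Ioc_union_Ioi_eq_Ioi zero_le_one, lintegral_union measurableSet_Ioi (Ioc_disjoint_Ioi le_rfl),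
    setLIntegral_congr_fun measurableSet_Ioi h_high, lintegral_zero, add_zero]

lemma tsum_mul_le_tsum_mul_tsub_add {μ : A → ℝ≥0∞} (hμ : SubDist μ) (f : A → ℝ≥0∞)
    (δ : ℝ≥0∞) : ∑' a, μ a * f a ≤ ∑' a, μ a * (f a - δ) + δ :=
  calc ∑' a, μ a * f a ≤ ∑' a, μ a * (f a - δ + δ) :=
        ENNReal.tsum_le_tsum fun a => mul_le_mul_right le_tsub_add _
    _ = ∑' a, μ a * (f a - δ) + (∑' a, μ a) * δ := by
        simp only [mul_add, ENNReal.tsum_add, ENNReal.tsum_mul_right]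
    _ ≤ ∑' a, μ a * (f a - δ) + δ := by
        grw [hμ.tsum_le_one, one_mul]

end Mass

theorem tsum_mul_le_of_mass_le {A₁ A₂ : Type*} {μ₁ : A₁ → ℝ≥0∞} {μ₂ : A₂ → ℝ≥0∞}
    {R : A₁ → A₂ → Prop} {c δ : ℝ≥0∞}
    (hμ : ∀ X, mass μ₁ X ≤ c * mass μ₂ (relImage R X) + δ)
    {f : A₁ → ℝ≥0∞} {g : A₂ → ℝ≥0∞} (hf : ∀ a, f a ≤ 1) (hg : ∀ a, g a ≤ 1)
    (hfg : ∀ a₁ a₂, R a₁ a₂ → f a₁ ≤ g a₂) :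
    ∑' a, μ₁ a * f a ≤ c * (∑' a, μ₂ a * g a) + δ := by
  have h_level : ∀ t : ℝ, mass μ₁ {a | ENNReal.ofReal t < f a}
      ≤ c * mass μ₂ {a | ENNReal.ofReal t < g a} + δ := fun t => by
    have h_image : relImage R {a | ENNReal.ofReal t < f a} ⊆ {a | ENNReal.ofReal t < g a} :=
      fun a₂ ⟨a₁, ht, hR⟩ => ht.trans_le (hfg a₁ a₂ hR)
    grw [hμ, mass_mono μ₂ h_image]
  rw [tsum_mul_eq_lintegral_mass_lt μ₁ f hf, tsum_mul_eq_lintegral_mass_lt μ₂ g hg]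
  calc ∫⁻ t in Ioc (0 : ℝ) 1, mass μ₁ {a | ENNReal.ofReal t < f a}
      ≤ ∫⁻ t in Ioc (0 : ℝ) 1, (c * mass μ₂ {a | ENNReal.ofReal t < g a} + δ) :=
        lintegral_mono fun t => h_level t
    _ = c * (∫⁻ t in Ioc (0 : ℝ) 1, mass μ₂ {a | ENNReal.ofReal t < g a}) + δ := by
        have h_anti : Antitone fun t : ℝ => mass μ₂ {a | ENNReal.ofReal t < g a} :=
          fun s t hst => mass_mono μ₂ fun a ha => (ENNReal.ofReal_le_ofReal hst).trans_lt ha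
        rw [lintegral_add_right _ measurable_const, lintegral_const_mul _ h_anti.measurable,
          setLIntegral_const, Real.volume_Ioc]
        norm_num

theorem starLift_seq_composition_general {A₁ A₂ B₁ B₂ : Type*}
    (μ₁ : A₁ → ℝ≥0∞) (μ₂ : A₂ → ℝ≥0∞) (h₁ : SubDist μ₁)
    (η₁ : A₁ → B₁ → ℝ≥0∞) (η₂ : A₂ → B₂ → ℝ≥0∞)
    (hη₁ : ∀ a, SubDist (η₁ a))
    (R : A₁ → A₂ → Prop) (S : B₁ → B₂ → Prop)
    (ε ε' δ δ' : ℝ)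
    (hμ : ∀ X : Set A₁,
      mass μ₁ X ≤ ENNReal.ofReal (Real.exp ε) * mass μ₂ (relImage R X) + ENNReal.ofReal δ)
    (hη : ∀ a₁ a₂, R a₁ a₂ → ∀ Y : Set B₁,
      mass (η₁ a₁) Y ≤ ENNReal.ofReal (Real.exp ε') * mass (η₂ a₂) (relImage S Y)
        + ENNReal.ofReal δ') :
    ∀ Y : Set B₁,
      mass (dbind μ₁ η₁) Y
        ≤ ENNReal.ofReal (Real.exp (ε + ε')) * mass (dbind μ₂ η₂) (relImage S Y)
          + (ENNReal.ofReal δ + ENNReal.ofReal δ') := by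
  intro Y
  set c := ENNReal.ofReal (Real.exp ε)
  set c' := ENNReal.ofReal (Real.exp ε')
  set h := fun a₂ => mass (η₂ a₂) (relImage S Y)
  set f := fun a₁ => mass (η₁ a₁) Y - ENNReal.ofReal δ'
  set g := fun a₂ => min (c' * h a₂) 1
  have hf : ∀ a, f a ≤ 1 := fun a => tsub_le_self.trans ((hη₁ a).mass_le_one Y)
  have hfg : ∀ a₁ a₂, R a₁ a₂ → f a₁ ≤ g a₂ := fun a₁ a₂ hR =>
    le_min (tsub_le_iff_right.2 (hη a₁ a₂ hR Y)) (hf a₁)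
  have hg_le : ∑' a, μ₂ a * g a ≤ c' * ∑' a, μ₂ a * h a := by
    simp only [← ENNReal.tsum_mul_left, mul_left_comm c']
    gcongr with a
    exact min_le_left _ _
  calc mass (dbind μ₁ η₁) Y = ∑' a, μ₁ a * mass (η₁ a) Y := mass_dbind μ₁ η₁ Y
    _ ≤ ∑' a, μ₁ a * f a + ENNReal.ofReal δ' := tsum_mul_le_tsum_mul_tsub_add h₁ _ _
    _ ≤ c * (∑' a, μ₂ a * g a) + ENNReal.ofReal δ + ENNReal.ofReal δ' := by
        grw [tsum_mul_le_of_mass_le hμ hf (fun _ => min_le_right _ _) hfg]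
    _ ≤ c * (c' * ∑' a, μ₂ a * h a) + ENNReal.ofReal δ + ENNReal.ofReal δ' := by grw [hg_le]
    _ = _ := by
        rw [mass_dbind, ← mul_assoc, ← ENNReal.ofReal_mul (Real.exp_pos ε).le, ← Real.exp_add,
          add_assoc]

theorem starLift_seq_composition {A₁ A₂ B₁ B₂ : Type*}
    (μ₁ : A₁ → ℝ≥0∞) (μ₂ : A₂ → ℝ≥0∞) (h₁ : SubDist μ₁) (h₂ : SubDist μ₂)
    (η₁ : A₁ → B₁ → ℝ≥0∞) (η₂ : A₂ → B₂ → ℝ≥0∞)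
    (hη₁ : ∀ a, SubDist (η₁ a)) (hη₂ : ∀ a, SubDist (η₂ a))
    (R : A₁ → A₂ → Prop) (S : B₁ → B₂ → Prop)
    (ε ε' δ δ' : ℝ) (hε : 0 ≤ ε) (hε' : 0 ≤ ε') (hδ : 0 ≤ δ) (hδ' : 0 ≤ δ')
    (hμ : ∀ X : Set A₁,
      mass μ₁ X ≤ ENNReal.ofReal (Real.exp ε) * mass μ₂ (relImage R X) + ENNReal.ofReal δ)
    (hη : ∀ a₁ a₂, R a₁ a₂ → ∀ Y : Set B₁,
      mass (η₁ a₁) Y ≤ ENNReal.ofReal (Real.exp ε') * mass (η₂ a₂) (relImage S Y)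
        + ENNReal.ofReal δ') :
    ∀ Y : Set B₁,
      mass (dbind μ₁ η₁) Y
        ≤ ENNReal.ofReal (Real.exp (ε + ε')) * mass (dbind μ₂ η₂) (relImage S Y)
          + (ENNReal.ofReal δ + ENNReal.ofReal δ') :=
  starLift_seq_composition_general μ₁ μ₂ h₁ η₁ η₂ hη₁ R S ε ε' δ δ' hμ hη
end
end
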